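/- arXiv:2008.04193 — 8 statements merged into one kernel-verified Lean document; each statement's English description precedes it below -/
import Mathlib

section
/- Every unital associative commutative algebra structure on ℂ² is isomorphic (as a unital algebra) either to the product algebra ℂ × ℂ (componentwise multiplication) or to the dual numbers algebra ℂ[X]/(X²). -/
/-!
Pick `x ∈ A` outside `K · 1`. Then `1, x` is a basis, so `x` is a root of a monic quadratic, which
splits over an algebraically closed field: `(x - α)(x - β) = 0`. If `α = β`, then `x - α` is a
nonzero element of square zero and `a + bε ↦ a + b(x - α)` is an isomorphism from the dual numbers.
If `α ≠ β`, then `e = (x - β)/(α - β)` is an idempotent other than `0` and `1`, and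
`(a, b) ↦ a e + b (1 - e)` is an isomorphism from `K × K`. In both cases injectivity is checked
by multiplying through by the idempotents, resp. by the square-zero element, and surjectivity is
a dimension count.
-/

open Module Polynomial

section

variable {K A B : Type*} [Field K] [Ring A] [Ring B] [Algebra K A] [Algebra K B]

noncomputable def AlgEquiv.ofInjectiveOfFinrankEq [FiniteDimensional K A] [FiniteDimensional K B]
    (f : A →ₐ[K] B) (hf : Function.Injective f) (h : finrank K A = finrank K B) : A ≃ₐ[K] B :=
  AlgEquiv.ofBijective f
    ⟨hf, (LinearMap.injective_iff_surjective_of_finrank_eq_finrank h (f := f.toLinearMap)).mp hf⟩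

end

variable {K A : Type*} [Field K] [CommRing A] [Algebra K A]

namespace DualNumber

def linearEquivProd : DualNumber K ≃ₗ[K] K × K :=
  LinearEquiv.refl K (K × K)

instance : FiniteDimensional K (DualNumber K) :=
  Module.Finite.equiv linearEquivProd.symm

theorem finrank_eq_two : finrank K (DualNumber K) = 2 := by
  simp [linearEquivProd.finrank_eq]

theorem lift_ofId_injective {y : A} (hy : y * y = 0) (hy0 : y ≠ 0) :
    Function.Injective (lift ⟨(Algebra.ofId K A, y), hy, fun _ => Commute.all _ _⟩) := by
  rw [injective_iff_map_eq_zero]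
  intro z hz
  rw [lift_apply_apply, Algebra.ofId_apply, Algebra.ofId_apply] at hz
  have hfst : z.fst = 0 := by
    have : z.fst • y = 0 := by
      simpa [Algebra.smul_def, add_mul, mul_assoc, hy] using congrArg (· * y) hz
    exact (smul_eq_zero.mp this).resolve_right hy0
  have hsnd : z.snd = 0 := by
    have : z.snd • y = 0 := by simpa [hfst, Algebra.smul_def] using hz
    exact (smul_eq_zero.mp this).resolve_right hy0
  exact TrivSqZeroExt.ext hfst hsnd

noncomputable def algEquivOfMulSelfEqZero (hA : finrank K A = 2) {y : A} (hy : y * y = 0)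
    (hy0 : y ≠ 0) : DualNumber K ≃ₐ[K] A :=
  have : FiniteDimensional K A := .of_finrank_eq_succ hA
  AlgEquiv.ofInjectiveOfFinrankEq _ (lift_ofId_injective hy hy0) (finrank_eq_two.trans hA.symm)

end DualNumber

namespace IsIdempotentElem

variable {e : A}

variable (K) in
noncomputable def prodAlgHom (he : IsIdempotentElem e) : (K × K) →ₐ[K] A :=
  AlgHom.ofLinearMap ((LinearMap.fst K K K).smulRight e + (LinearMap.snd K K K).smulRight (1 - e))
    (by simp) (by
      rintro ⟨a, b⟩ ⟨c, d⟩
      simp only [LinearMap.add_apply, LinearMap.smulRight_apply, LinearMap.fst_apply,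
        LinearMap.snd_apply, Prod.mk_mul_mk, Algebra.smul_def, map_mul]
      linear_combination (algebraMap K A a * algebraMap K A d + algebraMap K A b * algebraMap K A c
        - algebraMap K A a * algebraMap K A c - algebraMap K A b * algebraMap K A d) * he.eq)

theorem prodAlgHom_apply (he : IsIdempotentElem e) (p : K × K) :
    he.prodAlgHom K p = p.1 • e + p.2 • (1 - e) :=
  rfl

theorem prodAlgHom_injective (he : IsIdempotentElem e) (h0 : e ≠ 0) (h1 : e ≠ 1) :
    Function.Injective (he.prodAlgHom K) := by
  rw [injective_iff_map_eq_zero]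
  rintro ⟨a, b⟩ hab
  have hcompl : e * (1 - e) = 0 := by rw [mul_sub, mul_one, he.eq, sub_self]
  simp only [prodAlgHom_apply, Algebra.smul_def] at hab
  have ha : a • e = 0 := by
    rw [Algebra.smul_def]
    linear_combination e * hab - algebraMap K A b * hcompl - algebraMap K A a * he.eq
  have hb : b • (1 - e) = 0 := by
    rw [Algebra.smul_def]
    linear_combination (1 - e) * hab - algebraMap K A a * hcompl - algebraMap K A b * he.eq
  rw [(smul_eq_zero.mp ha).resolve_right h0,
    (smul_eq_zero.mp hb).resolve_right (sub_ne_zero.mpr h1.symm)]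
  rfl

noncomputable def prodAlgEquiv (hA : finrank K A = 2) (he : IsIdempotentElem e) (h0 : e ≠ 0)
    (h1 : e ≠ 1) : (K × K) ≃ₐ[K] A :=
  have : FiniteDimensional K A := .of_finrank_eq_succ hA
  AlgEquiv.ofInjectiveOfFinrankEq (he.prodAlgHom K) (he.prodAlgHom_injective h0 h1)
    (by rw [finrank_prod, finrank_self, hA])

end IsIdempotentElem

/-- The Lagrange interpolation idempotent, equal to `1` at `α` and `0` at `β`. -/
theorem isIdempotentElem_smul_sub_of_sub_mul_sub_eq_zero {x : A} {α β : K} (hαβ : α ≠ β)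
    (hx : (x - algebraMap K A α) * (x - algebraMap K A β) = 0) :
    IsIdempotentElem ((α - β)⁻¹ • (x - algebraMap K A β)) := by
  have hunit : algebraMap K A (α - β)⁻¹ * (algebraMap K A α - algebraMap K A β) = 1 := by
    rw [← map_sub, ← map_mul, inv_mul_cancel₀ (sub_ne_zero.mpr hαβ), map_one]
  simp only [IsIdempotentElem, Algebra.smul_def]
  linear_combination (algebraMap K A (α - β)⁻¹) ^ 2 * hx
    + algebraMap K A (α - β)⁻¹ * (x - algebraMap K A β) * hunit

theorem exists_sub_mul_sub_eq_zero_of_finrank_eq_two [IsAlgClosed K] (hA : finrank K A = 2)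
    {x : A} (hx : LinearIndependent K ![1, x]) :
    ∃ α β : K, (x - algebraMap K A α) * (x - algebraMap K A β) = 0 := by
  have hspan : Submodule.span K {1, x} = ⊤ := by
    simpa [Matrix.range_cons, Matrix.range_empty, Set.union_singleton, Set.pair_comm] using
      hx.span_eq_top_of_card_eq_finrank (by simp [hA])
  obtain ⟨s, t, hst⟩ := Submodule.mem_span_pair.mp (hspan ▸ Submodule.mem_top : x * x ∈ _)
  obtain ⟨α, hα⟩ := IsAlgClosed.exists_root (X ^ 2 - C t * X - C s)
    (ne_of_eq_of_ne (by compute_degree!) two_ne_zero)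
  refine ⟨α, t - α, ?_⟩
  have hα' :
      algebraMap K A α ^ 2 - algebraMap K A t * algebraMap K A α - algebraMap K A s = 0 := by
    simpa using congrArg (algebraMap K A) hα.eq_zero
  simp only [Algebra.smul_def, mul_one, map_sub] at hst ⊢
  linear_combination -hst - hα'

theorem exists_mul_self_eq_zero_or_exists_isIdempotentElem [IsAlgClosed K]
    (hA : finrank K A = 2) :
    (∃ y : A, y * y = 0 ∧ y ≠ 0) ∨ ∃ e : A, IsIdempotentElem e ∧ e ≠ 0 ∧ e ≠ 1 := by
  have : Nontrivial A := nontrivial_of_finrank_pos (R := K) (by omega)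
  obtain ⟨x, hx⟩ :=
    exists_linearIndependent_pair_of_one_lt_finrank (R := K) (by omega) (one_ne_zero' A)
  have hx_ne (a : K) : x - algebraMap K A a ≠ 0 := by
    rw [sub_ne_zero, Algebra.algebraMap_eq_smul_one]
    exact ((LinearIndependent.pair_iff' one_ne_zero).mp hx a).symm
  obtain ⟨α, β, hαβ⟩ := exists_sub_mul_sub_eq_zero_of_finrank_eq_two hA hx
  rcases eq_or_ne α β with rfl | hne
  · exact .inl ⟨_, hαβ, hx_ne α⟩
  · refine .inr ⟨_, isIdempotentElem_smul_sub_of_sub_mul_sub_eq_zero hne hαβ,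
      smul_ne_zero (inv_ne_zero (sub_ne_zero.mpr hne)) (hx_ne β), fun h1 => hx_ne α ?_⟩
    have hxβ : x - algebraMap K A β = algebraMap K A (α - β) := by
      rw [← smul_inv_smul₀ (sub_ne_zero.mpr hne) (x - _), h1, Algebra.algebraMap_eq_smul_one]
    rw [map_sub] at hxβ
    linear_combination hxβ

/-- Every unital associative commutative complex algebra of dimension 2 (i.e. an algebra
structure on `ℂ²`) is isomorphic as a unital algebra either to the product algebra `ℂ × ℂ`
or to the dual numbers `ℂ[X]/(X²)`. -/
theorem stmt0 (A : Type) [CommRing A] [Algebra ℂ A]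
    (h : Module.finrank ℂ A = 2) :
    Nonempty (A ≃ₐ[ℂ] (ℂ × ℂ)) ∨ Nonempty (A ≃ₐ[ℂ] DualNumber ℂ) := by
  rcases exists_mul_self_eq_zero_or_exists_isIdempotentElem h with ⟨y, hy, hy0⟩ | ⟨e, he, h0, h1⟩
  · exact .inr ⟨(DualNumber.algEquivOfMulSelfEqZero h hy hy0).symm⟩
  · exact .inl ⟨(he.prodAlgEquiv h h0 h1).symm⟩
end

section
/- Let Δ_Z : ℂ² → ℂ²⊗ℂ² be the copy map Δ_Z|i⟩ = |i⟩⊗|i⟩ for i ∈ {0,1}. A symmetric linear map μ : ℂ²⊗ℂ² → ℂ² (i.e. μ∘σ = μ) satisfies the bigebra law Δ_Z ∘ μ = (μ ⊗ μ) ∘ (id ⊗ σ ⊗ id) ∘ (Δ_Z ⊗ Δ_Z) if and only if all entries of its matrix in the computational basis lie in {0,1} and no column of that 2×4 matrix is (1,1)ᵀ. -/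
open Matrix Kronecker

/-- The swap on `ℂ² ⊗ ℂ²`. -/
noncomputable def sw : Matrix (Fin 2 × Fin 2) (Fin 2 × Fin 2) ℂ :=
  Matrix.of fun p q => if p.1 = q.2 ∧ p.2 = q.1 then 1 else 0

/-- `id ⊗ σ ⊗ id` on four tensor factors grouped as `((a,b),(c,d)) ↦ ((a,c),(b,d))`. -/
noncomputable def mid4 :
    Matrix ((Fin 2 × Fin 2) × (Fin 2 × Fin 2)) ((Fin 2 × Fin 2) × (Fin 2 × Fin 2)) ℂ :=
  Matrix.of fun p q => if p = ((q.1.1, q.2.1), (q.1.2, q.2.2)) then 1 else 0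

/-- The copy map `Δ_Z|i⟩ = |i⟩⊗|i⟩`. -/
noncomputable def deltaZ : Matrix (Fin 2 × Fin 2) (Fin 2) ℂ :=
  Matrix.of fun p i => if p.1 = i ∧ p.2 = i then 1 else 0

lemma lhs_entry (μ : Matrix (Fin 2) (Fin 2 × Fin 2) ℂ) (j k a b : Fin 2) :
    (deltaZ * μ) (j,k) (a,b) = if j = k then μ j (a,b) else 0 := by
  simp [Matrix.mul_apply, Fin.sum_univ_two, deltaZ]
  fin_cases j <;> fin_cases k <;> simp

lemma rhs_entry (μ : Matrix (Fin 2) (Fin 2 × Fin 2) ℂ) (j k a b : Fin 2) :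
    ((μ ⊗ₖ μ) * mid4 * (deltaZ ⊗ₖ deltaZ)) (j,k) (a,b) = μ j (a,b) * μ k (a,b) := by
  simp [Matrix.mul_apply, Fintype.sum_prod_type, Fin.sum_univ_two, deltaZ, mid4, Prod.ext_iff]
  fin_cases a <;> fin_cases b <;> simp

/-- A symmetric `μ : ℂ²⊗ℂ² → ℂ²` satisfies the bigebra law with `Δ_Z` iff all entries of its
`2×4` matrix are `0` or `1` and no column is `(1,1)ᵀ`. -/
theorem stmt5 (μ : Matrix (Fin 2) (Fin 2 × Fin 2) ℂ) (hsym : μ * sw = μ) :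
    deltaZ * μ = (μ ⊗ₖ μ) * mid4 * (deltaZ ⊗ₖ deltaZ) ↔
      ((∀ i p, μ i p = 0 ∨ μ i p = 1) ∧ ∀ p, ¬ (μ 0 p = 1 ∧ μ 1 p = 1)) := by
  have key : deltaZ * μ = (μ ⊗ₖ μ) * mid4 * (deltaZ ⊗ₖ deltaZ) ↔
      ∀ j k p, (if j = k then μ j p else 0) = μ j p * μ k p := by
    rw [← Matrix.ext_iff]
    constructor
    · intro h j k p
      have := h (j,k) p
      rwa [lhs_entry, rhs_entry] at this
    · intro h p q
      rw [lhs_entry, rhs_entry]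
      exact h _ _ _
  rw [key]
  constructor
  · intro h
    constructor
    · intro i p
      have h1 := h i i p
      simp at h1
      have h2 : μ i p * (μ i p - 1) = 0 := by linear_combination -h1
      rcases mul_eq_zero.mp h2 with h3 | h3
      · exact Or.inl h3
      · exact Or.inr (by linear_combination h3)
    · intro p ⟨h0, h1⟩
      have := h 0 1 p
      simp [h0, h1] at this
  · rintro ⟨h01, hcol⟩ j k p
    by_cases hjk : j = k
    · subst hjk
      simp
      rcases h01 j p with h | h <;> simp [h]
    · simp [hjk]
      rcases h01 0 p with h0 | h0
      · have hj : j = 0 ∨ k = 0 := by fin_cases j <;> fin_cases k <;> simp_all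
        rcases hj with rfl | rfl
        · exact Or.inl h0
        · exact Or.inr h0
      · rcases h01 1 p with h1 | h1
        · have hj : j = 1 ∨ k = 1 := by fin_cases j <;> fin_cases k <;> simp_all
          rcases hj with rfl | rfl
          · exact Or.inl h1
          · exact Or.inr h1
        · exact absurd ⟨h0, h1⟩ (hcol p)
end

section
/- Let (μ, η, Δ, ε) be a commutative Frobenius algebra in a symmetric monoidal category, and suppose (Δ', ε') is another comonoid on the same object forming a Frobenius algebra with (μ, η). Then there exists an invertible phase α (an invertible endomorphism with μ∘(α⊗id) = α∘μ) such that Δ' = (α ⊗ id)∘Δ and ε' = ε∘α⁻¹. -/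
/-!
A Frobenius comultiplication is a bimodule map, so it is determined by its value `η ≫ Δ` on the
unit, and `η ≫ Δ` is a nondegenerate copairing: it is inverse to the pairing `μ ≫ ε` in the snake
sense. Contracting `Δ'` with `ε` gives `a = (id ⊗ ε) ∘ Δ'`, which is left `A`-linear because `Δ'` is.
The snake identity for `(Δ, ε)` shows that `a ⊗ id` carries the copairing of `Δ` to that of `Δ'`,
hence `Δ' = (a ⊗ id) ∘ Δ`. Symmetrically `b = (id ⊗ ε') ∘ Δ` satisfies `Δ = (b ⊗ id) ∘ Δ'`, and the
counit laws make `a` and `b` mutually inverse and give `ε' = ε ∘ b`.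
-/

open CategoryTheory MonoidalCategory

namespace FrobeniusUniqueness

variable {C : Type*} [Category C] [MonoidalCategory C]

def contractRight {X Y Z : C} (f : X ⟶ Y ⊗ Z) (e : Z ⟶ 𝟙_ C) : X ⟶ Y :=
  f ≫ Y ◁ e ≫ (ρ_ Y).hom

section Contraction

variable {X Y Z : C}

theorem contractRight_comp (f : X ⟶ Y ⊗ Z) (e : Z ⟶ 𝟙_ C) {W : C} (g : Y ⟶ W) :
    contractRight f e ≫ g = contractRight (f ≫ g ▷ Z) e := by
  simp only [contractRight, Category.assoc, ← whisker_exchange_assoc, rightUnitor_naturality]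

theorem contractRight_comp_counit (f : X ⟶ Y ⊗ Z) (e : Y ⟶ 𝟙_ C) (e' : Z ⟶ 𝟙_ C) :
    contractRight f e' ≫ e = (f ≫ e ▷ Z ≫ (λ_ Z).hom) ≫ e' := by
  simp only [contractRight, Category.assoc]
  calc f ≫ Y ◁ e' ≫ (ρ_ Y).hom ≫ e
      = f ≫ (Y ◁ e' ≫ e ▷ 𝟙_ C) ≫ (λ_ (𝟙_ C)).hom := by monoidal
    _ = f ≫ (e ▷ Z ≫ 𝟙_ C ◁ e') ≫ (λ_ (𝟙_ C)).hom := by rw [← whisker_exchange]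
    _ = f ≫ e ▷ Z ≫ (λ_ Z).hom ≫ e' := by monoidal

end Contraction

variable {A : C} {μ : A ⊗ A ⟶ A} {η : 𝟙_ C ⟶ A}

theorem comul_eq_of_frobenius {Δ : A ⟶ A ⊗ A} (hur : A ◁ η ≫ μ = (ρ_ A).hom)
    (hlin : A ◁ Δ ≫ (α_ A A A).inv ≫ μ ▷ A = μ ≫ Δ) :
    (ρ_ A).inv ≫ A ◁ (η ≫ Δ) ≫ (α_ A A A).inv ≫ μ ▷ A = Δ := by
  rw [MonoidalCategory.whiskerLeft_comp, Category.assoc, hlin, ← Category.assoc (A ◁ η),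
    hur, Iso.inv_hom_id_assoc]

theorem snake_of_frobenius {Δ : A ⟶ A ⊗ A} {ε : A ⟶ 𝟙_ C} (hur : A ◁ η ≫ μ = (ρ_ A).hom)
    (hcl : Δ ≫ ε ▷ A = (λ_ A).inv) (hlin : A ◁ Δ ≫ (α_ A A A).inv ≫ μ ▷ A = μ ≫ Δ) :
    A ◁ (η ≫ Δ) ≫ (α_ A A A).inv ≫ (μ ≫ ε) ▷ A = (ρ_ A).hom ≫ (λ_ A).inv := by
  calc A ◁ (η ≫ Δ) ≫ (α_ A A A).inv ≫ (μ ≫ ε) ▷ A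
      = A ◁ η ≫ (A ◁ Δ ≫ (α_ A A A).inv ≫ μ ▷ A) ≫ ε ▷ A := by simp
    _ = (ρ_ A).hom ≫ (λ_ A).inv := by
        rw [hlin]; simp only [Category.assoc]; rw [hcl, reassoc_of% hur]

theorem contractRight_eq_zigzag {Δ' : A ⟶ A ⊗ A} (ε : A ⟶ 𝟙_ C)
    (hul : η ▷ A ≫ μ = (λ_ A).hom) (hlin : Δ' ▷ A ≫ (α_ A A A).hom ≫ A ◁ μ = μ ≫ Δ') :
    contractRight Δ' ε =
      (λ_ A).inv ≫ (η ≫ Δ') ▷ A ≫ (α_ A A A).hom ≫ A ◁ (μ ≫ ε) ≫ (ρ_ A).hom := by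
  calc contractRight Δ' ε
      = (λ_ A).inv ≫ (η ▷ A ≫ μ) ≫ Δ' ≫ A ◁ ε ≫ (ρ_ A).hom := by
        rw [hul, Iso.inv_hom_id_assoc]; rfl
    _ = _ := by rw [Category.assoc, ← reassoc_of% hlin]; simp

theorem mul_contractRight {Δ' : A ⟶ A ⊗ A} (ε : A ⟶ 𝟙_ C)
    (hlin : A ◁ Δ' ≫ (α_ A A A).inv ≫ μ ▷ A = μ ≫ Δ') :
    μ ≫ contractRight Δ' ε = A ◁ contractRight Δ' ε ≫ μ := by
  calc μ ≫ contractRight Δ' ε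
      = A ◁ Δ' ≫ (α_ A A A).inv ≫ (μ ▷ A ≫ A ◁ ε) ≫ (ρ_ A).hom := by
        rw [contractRight, ← Category.assoc, ← hlin]; simp
    _ = A ◁ Δ' ≫ (α_ A A A).inv ≫ ((A ⊗ A) ◁ ε ≫ μ ▷ 𝟙_ C) ≫ (ρ_ A).hom := by
        rw [whisker_exchange]
    _ = A ◁ contractRight Δ' ε ≫ μ := by rw [contractRight]; monoidal

theorem unit_comul_comp_contractRight {Δ Δ' : A ⟶ A ⊗ A} {ε : A ⟶ 𝟙_ C}
    (hul : η ▷ A ≫ μ = (λ_ A).hom) (hur : A ◁ η ≫ μ = (ρ_ A).hom)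
    (hcl : Δ ≫ ε ▷ A = (λ_ A).inv) (hlin : A ◁ Δ ≫ (α_ A A A).inv ≫ μ ▷ A = μ ≫ Δ)
    (hlin' : Δ' ▷ A ≫ (α_ A A A).hom ≫ A ◁ μ = μ ≫ Δ') :
    (η ≫ Δ) ≫ contractRight Δ' ε ▷ A = η ≫ Δ' := by
  calc (η ≫ Δ) ≫ contractRight Δ' ε ▷ A
      = 𝟙 (𝟙_ C) ⊗≫ (𝟙_ C ◁ (η ≫ Δ) ≫ (η ≫ Δ') ▷ (A ⊗ A)) ⊗≫
          A ◁ ((α_ A A A).inv ≫ (μ ≫ ε) ▷ A) ⊗≫ 𝟙 (A ⊗ A) := by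
        rw [contractRight_eq_zigzag ε hul hlin']; monoidal
    _ = (η ≫ Δ') ⊗≫ A ◁ (A ◁ (η ≫ Δ) ≫ (α_ A A A).inv ≫ (μ ≫ ε) ▷ A) ⊗≫ 𝟙 (A ⊗ A) := by
        rw [whisker_exchange]; monoidal
    _ = η ≫ Δ' := by rw [snake_of_frobenius hur hcl hlin]; monoidal

theorem comul_comp_contractRight {Δ Δ' : A ⟶ A ⊗ A} {ε : A ⟶ 𝟙_ C}
    (hul : η ▷ A ≫ μ = (λ_ A).hom) (hur : A ◁ η ≫ μ = (ρ_ A).hom)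
    (hcl : Δ ≫ ε ▷ A = (λ_ A).inv) (hlin : A ◁ Δ ≫ (α_ A A A).inv ≫ μ ▷ A = μ ≫ Δ)
    (hlin₁' : A ◁ Δ' ≫ (α_ A A A).inv ≫ μ ▷ A = μ ≫ Δ')
    (hlin₂' : Δ' ▷ A ≫ (α_ A A A).hom ≫ A ◁ μ = μ ≫ Δ') :
    Δ ≫ contractRight Δ' ε ▷ A = Δ' := by
  calc Δ ≫ contractRight Δ' ε ▷ A
      = (ρ_ A).inv ≫ A ◁ (η ≫ Δ) ≫ (α_ A A A).inv ≫ (μ ≫ contractRight Δ' ε) ▷ A := by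
        conv_lhs => rw [← comul_eq_of_frobenius hur hlin]
        simp only [comp_whiskerRight, Category.assoc]
    _ = (ρ_ A).inv ≫ A ◁ ((η ≫ Δ) ≫ contractRight Δ' ε ▷ A) ≫ (α_ A A A).inv ≫ μ ▷ A := by
        rw [mul_contractRight ε hlin₁']
        simp only [comp_whiskerRight, MonoidalCategory.whiskerLeft_comp, Category.assoc,
          associator_inv_naturality_middle_assoc]
    _ = Δ' := by
        rw [unit_comul_comp_contractRight hul hur hcl hlin hlin₂', comul_eq_of_frobenius hur hlin₁']

theorem whiskerRight_mul_of_mul_comm [BraidedCategory C] {a : A ⟶ A}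
    (hcomm : (β_ A A).hom ≫ μ = μ) (ha : μ ≫ a = A ◁ a ≫ μ) :
    a ▷ A ≫ μ = μ ≫ a := by
  rw [← hcomm, BraidedCategory.braiding_naturality_left_assoc, Category.assoc, ← ha,
    reassoc_of% hcomm]

end FrobeniusUniqueness

open FrobeniusUniqueness in
theorem stmt8_general {C : Type*} [Category C] [MonoidalCategory C] [SymmetricCategory C]
    (A : C) (μ : A ⊗ A ⟶ A) (η : 𝟙_ C ⟶ A) (Δ Δ' : A ⟶ A ⊗ A) (ε ε' : A ⟶ 𝟙_ C)
    -- commutative monoid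
    (hunitl : (λ_ A).inv ≫ (η ⊗ₘ 𝟙 A) ≫ μ = 𝟙 A)
    (hunitr : (ρ_ A).inv ≫ (𝟙 A ⊗ₘ η) ≫ μ = 𝟙 A)
    (hcomm : (β_ A A).hom ≫ μ = μ)
    -- cocommutative comonoid (Δ, ε)
    (hcounitl : Δ ≫ (ε ⊗ₘ 𝟙 A) ≫ (λ_ A).hom = 𝟙 A)
    (hcounitr : Δ ≫ (𝟙 A ⊗ₘ ε) ≫ (ρ_ A).hom = 𝟙 A)
    -- Frobenius law for (μ, η, Δ, ε)
    (hfrob₁ : (𝟙 A ⊗ₘ Δ) ≫ (α_ A A A).inv ≫ (μ ⊗ₘ 𝟙 A) = μ ≫ Δ)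
    (hfrob₂ : (Δ ⊗ₘ 𝟙 A) ≫ (α_ A A A).hom ≫ (𝟙 A ⊗ₘ μ) = μ ≫ Δ)
    -- cocommutative comonoid (Δ', ε')
    (hcounitl' : Δ' ≫ (ε' ⊗ₘ 𝟙 A) ≫ (λ_ A).hom = 𝟙 A)
    (hcounitr' : Δ' ≫ (𝟙 A ⊗ₘ ε') ≫ (ρ_ A).hom = 𝟙 A)
    -- Frobenius law for (μ, η, Δ', ε')
    (hfrob₁' : (𝟙 A ⊗ₘ Δ') ≫ (α_ A A A).inv ≫ (μ ⊗ₘ 𝟙 A) = μ ≫ Δ')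
    (hfrob₂' : (Δ' ⊗ₘ 𝟙 A) ≫ (α_ A A A).hom ≫ (𝟙 A ⊗ₘ μ) = μ ≫ Δ') :
    ∃ a ainv : A ⟶ A,
      a ≫ ainv = 𝟙 A ∧ ainv ≫ a = 𝟙 A ∧
      (a ⊗ₘ 𝟙 A) ≫ μ = μ ≫ a ∧
      Δ' = Δ ≫ (a ⊗ₘ 𝟙 A) ∧ ε' = ainv ≫ ε := by
  simp only [id_tensorHom, tensorHom_id] at *
  have hul : η ▷ A ≫ μ = (λ_ A).hom := by simpa using (λ_ A).hom ≫= hunitl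
  have hur : A ◁ η ≫ μ = (ρ_ A).hom := by simpa using (ρ_ A).hom ≫= hunitr
  have hcl : Δ ≫ ε ▷ A = (λ_ A).inv := by simpa using hcounitl =≫ (λ_ A).inv
  have hcl' : Δ' ≫ ε' ▷ A = (λ_ A).inv := by simpa using hcounitl' =≫ (λ_ A).inv
  have hΔ' : Δ ≫ contractRight Δ' ε ▷ A = Δ' :=
    comul_comp_contractRight hul hur hcl hfrob₁ hfrob₁' hfrob₂'
  have hΔ : Δ' ≫ contractRight Δ ε' ▷ A = Δ :=
    comul_comp_contractRight hul hur hcl' hfrob₁' hfrob₁ hfrob₂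
  refine ⟨contractRight Δ' ε, contractRight Δ ε', ?_, ?_, ?_, hΔ'.symm, ?_⟩
  · rw [contractRight_comp, hΔ]; exact hcounitr
  · rw [contractRight_comp, hΔ']; exact hcounitr'
  · exact whiskerRight_mul_of_mul_comm hcomm (mul_contractRight ε hfrob₁')
  · rw [contractRight_comp_counit, hcounitl, Category.id_comp]

/-- If `(μ, η, Δ, ε)` is a commutative Frobenius algebra in a symmetric monoidal category
and `(Δ', ε')` is another comonoid forming a Frobenius algebra with `(μ, η)`, then there is an
invertible phase `α` with `Δ' = (α ⊗ id) ∘ Δ` and `ε' = ε ∘ α⁻¹`. -/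
theorem stmt8 {C : Type*} [Category C] [MonoidalCategory C] [SymmetricCategory C]
    (A : C) (μ : A ⊗ A ⟶ A) (η : 𝟙_ C ⟶ A) (Δ Δ' : A ⟶ A ⊗ A) (ε ε' : A ⟶ 𝟙_ C)
    -- commutative monoid
    (hassoc : (α_ A A A).hom ≫ (𝟙 A ⊗ₘ μ) ≫ μ = (μ ⊗ₘ 𝟙 A) ≫ μ)
    (hunitl : (λ_ A).inv ≫ (η ⊗ₘ 𝟙 A) ≫ μ = 𝟙 A)
    (hunitr : (ρ_ A).inv ≫ (𝟙 A ⊗ₘ η) ≫ μ = 𝟙 A)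
    (hcomm : (β_ A A).hom ≫ μ = μ)
    -- cocommutative comonoid (Δ, ε)
    (hcoassoc : Δ ≫ (Δ ⊗ₘ 𝟙 A) ≫ (α_ A A A).hom = Δ ≫ (𝟙 A ⊗ₘ Δ))
    (hcounitl : Δ ≫ (ε ⊗ₘ 𝟙 A) ≫ (λ_ A).hom = 𝟙 A)
    (hcounitr : Δ ≫ (𝟙 A ⊗ₘ ε) ≫ (ρ_ A).hom = 𝟙 A)
    (hcocomm : Δ ≫ (β_ A A).hom = Δ)
    -- Frobenius law for (μ, η, Δ, ε)
    (hfrob₁ : (𝟙 A ⊗ₘ Δ) ≫ (α_ A A A).inv ≫ (μ ⊗ₘ 𝟙 A) = μ ≫ Δ)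
    (hfrob₂ : (Δ ⊗ₘ 𝟙 A) ≫ (α_ A A A).hom ≫ (𝟙 A ⊗ₘ μ) = μ ≫ Δ)
    -- cocommutative comonoid (Δ', ε')
    (hcoassoc' : Δ' ≫ (Δ' ⊗ₘ 𝟙 A) ≫ (α_ A A A).hom = Δ' ≫ (𝟙 A ⊗ₘ Δ'))
    (hcounitl' : Δ' ≫ (ε' ⊗ₘ 𝟙 A) ≫ (λ_ A).hom = 𝟙 A)
    (hcounitr' : Δ' ≫ (𝟙 A ⊗ₘ ε') ≫ (ρ_ A).hom = 𝟙 A)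
    (hcocomm' : Δ' ≫ (β_ A A).hom = Δ')
    -- Frobenius law for (μ, η, Δ', ε')
    (hfrob₁' : (𝟙 A ⊗ₘ Δ') ≫ (α_ A A A).inv ≫ (μ ⊗ₘ 𝟙 A) = μ ≫ Δ')
    (hfrob₂' : (Δ' ⊗ₘ 𝟙 A) ≫ (α_ A A A).hom ≫ (𝟙 A ⊗ₘ μ) = μ ≫ Δ') :
    ∃ a ainv : A ⟶ A,
      a ≫ ainv = 𝟙 A ∧ ainv ≫ a = 𝟙 A ∧
      (a ⊗ₘ 𝟙 A) ≫ μ = μ ≫ a ∧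
      Δ' = Δ ≫ (a ⊗ₘ 𝟙 A) ∧ ε' = ainv ≫ ε :=
  stmt8_general A μ η Δ Δ' ε ε' hunitl hunitr hcomm hcounitl hcounitr hfrob₁ hfrob₂ hcounitl'
    hcounitr' hfrob₁' hfrob₂'
end

section
/- The set of phases of the monoid μ_W on ℂ² (given by μ_W|00⟩=|0⟩, μ_W|01⟩=μ_W|10⟩=|1⟩, μ_W|11⟩=0) is exactly the set of invertible lower-triangular matrices of the form a·[[1,0],[b,1]] with a ∈ ℂ*, b ∈ ℂ; hence the phase group is isomorphic to ℂ* × ℂ (multiplicative times additive). -/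
/-!
Evaluated on `|01⟩`, the relation `μ_W (α ⊗ id) = α μ_W` says exactly that `α` is lower
triangular with equal diagonal entries, and these relations already imply the whole identity.
Writing such an invertible matrix as `a • !![1, 0; b, 1]`, multiplication multiplies the `a`'s
and adds the `b`'s, so `α ↦ (α₀₀, α₁₀ / α₀₀)` is the isomorphism with `ℂˣ × ℂ`.
-/

open Matrix Kronecker

/-- `μ_W|00⟩ = |0⟩, μ_W|01⟩ = μ_W|10⟩ = |1⟩, μ_W|11⟩ = 0`. -/
noncomputable def muW : Matrix (Fin 2) (Fin 2 × Fin 2) ℂ :=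
  Matrix.of fun i p => if (p.1 : ℕ) + (p.2 : ℕ) = (i : ℕ) then 1 else 0

/-- `α` is a phase of the monoid `μ_W`: invertible and `μ_W ∘ (α ⊗ id) = α ∘ μ_W`. -/
noncomputable def IsPhaseW (α : Matrix (Fin 2) (Fin 2) ℂ) : Prop :=
  IsUnit α ∧ muW * (α ⊗ₖ (1 : Matrix (Fin 2) (Fin 2) ℂ)) = α * muW

lemma muW_mul_kronecker_one_eq_iff (α : Matrix (Fin 2) (Fin 2) ℂ) :
    muW * (α ⊗ₖ (1 : Matrix (Fin 2) (Fin 2) ℂ)) = α * muW ↔ α 0 1 = 0 ∧ α 1 1 = α 0 0 := by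
  constructor
  · intro h
    have h0 := congrFun (congrFun h 0) (0, 1)
    have h1 := congrFun (congrFun h 1) (0, 1)
    simp [Matrix.mul_apply, muW, Fintype.sum_prod_type, Fin.sum_univ_two,
      Matrix.one_apply] at h0 h1
    exact ⟨h0.symm, h1.symm⟩
  · rintro ⟨h01, h11⟩
    ext i p
    fin_cases i <;> fin_cases p <;>
      simp [Matrix.mul_apply, muW, Fintype.sum_prod_type, Fin.sum_univ_two,
        Matrix.one_apply, h01, h11]

lemma isPhaseW_iff (α : Matrix (Fin 2) (Fin 2) ℂ) :
    IsPhaseW α ↔ α 0 1 = 0 ∧ α 1 1 = α 0 0 ∧ α 0 0 ≠ 0 := by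
  rw [IsPhaseW, muW_mul_kronecker_one_eq_iff, and_comm, and_assoc]
  refine and_congr_right fun h01 => and_congr_right fun h11 => ?_
  rw [Matrix.isUnit_iff_isUnit_det, Matrix.det_fin_two, h01, h11, isUnit_iff_ne_zero]
  simp

lemma isPhaseW_smul (a b : ℂ) (ha : a ≠ 0) : IsPhaseW (a • !![1, 0; b, 1]) := by
  rw [isPhaseW_iff]
  simp [ha]

lemma isPhaseW_iff_exists_smul (α : Matrix (Fin 2) (Fin 2) ℂ) :
    IsPhaseW α ↔ ∃ a b : ℂ, a ≠ 0 ∧ α = a • !![1, 0; b, 1] := by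
  refine ⟨fun hα => ?_, fun ⟨a, b, ha, hα⟩ => hα ▸ isPhaseW_smul a b ha⟩
  obtain ⟨h01, h11, h00⟩ := (isPhaseW_iff α).mp hα
  refine ⟨α 0 0, α 1 0 / α 0 0, h00, ?_⟩
  ext i j
  fin_cases i <;> fin_cases j <;> simp [h01, h11, mul_div_cancel₀ _ h00]

noncomputable def phaseWEquiv : {α : Matrix (Fin 2) (Fin 2) ℂ // IsPhaseW α} ≃ ℂˣ × ℂ where
  toFun α := (Units.mk0 (α.1 0 0) ((isPhaseW_iff α.1).mp α.2).2.2, α.1 1 0 / α.1 0 0)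
  invFun p := ⟨(p.1 : ℂ) • !![1, 0; p.2, 1], isPhaseW_smul _ _ p.1.ne_zero⟩
  left_inv := by
    rintro ⟨α, hα⟩
    obtain ⟨h01, h11, h00⟩ := (isPhaseW_iff α).mp hα
    ext i j
    fin_cases i <;> fin_cases j <;> simp [h01, h11, mul_div_cancel₀ _ h00]
  right_inv := by
    rintro ⟨a, b⟩
    ext <;> simp [a.ne_zero]

lemma phaseWEquiv_mul (α β : {α : Matrix (Fin 2) (Fin 2) ℂ // IsPhaseW α})
    (h : IsPhaseW (α.1 * β.1)) :
    phaseWEquiv ⟨α.1 * β.1, h⟩ =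
      ((phaseWEquiv α).1 * (phaseWEquiv β).1, (phaseWEquiv α).2 + (phaseWEquiv β).2) := by
  obtain ⟨hα01, hα11, hα00⟩ := (isPhaseW_iff α.1).mp α.2
  obtain ⟨-, -, hβ00⟩ := (isPhaseW_iff β.1).mp β.2
  have h00 : (α.1 * β.1) 0 0 = α.1 0 0 * β.1 0 0 := by
    simp [Matrix.mul_apply, Fin.sum_univ_two, hα01]
  have h10 : (α.1 * β.1) 1 0 = α.1 1 0 * β.1 0 0 + α.1 0 0 * β.1 1 0 := by
    simp [Matrix.mul_apply, Fin.sum_univ_two, hα11]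
  refine Prod.ext (Units.ext ?_) ?_
  · exact h00
  · change (α.1 * β.1) 1 0 / (α.1 * β.1) 0 0 = α.1 1 0 / α.1 0 0 + β.1 1 0 / β.1 0 0
    rw [h00, h10]
    field_simp

/-- The phases of `μ_W` are exactly the matrices `a·[[1,0],[b,1]]` with `a ∈ ℂ*`, `b ∈ ℂ`;
the phase group is isomorphic to `ℂ* × ℂ` (multiplicative times additive). -/
theorem stmt10 :
    (∀ α : Matrix (Fin 2) (Fin 2) ℂ,
      IsPhaseW α ↔ ∃ a b : ℂ, a ≠ 0 ∧ α = a • !![1, 0; b, 1]) ∧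
    ∃ e : {α : Matrix (Fin 2) (Fin 2) ℂ // IsPhaseW α} ≃ ℂˣ × ℂ,
      ∀ (x y : {α : Matrix (Fin 2) (Fin 2) ℂ // IsPhaseW α})
        (h : IsPhaseW (x.1 * y.1)),
        e ⟨x.1 * y.1, h⟩ = ((e x).1 * (e y).1, (e x).2 + (e y).2) :=
  ⟨isPhaseW_iff_exists_smul, phaseWEquiv, phaseWEquiv_mul⟩
end

section
/- In the prop LinRel_K of linear relations (morphisms n → m are linear subspaces of K^{n+m}), the subspaces M ⊆ K³ that are unital associative commutative multiplications on the object 1 are exactly {(x,x,x) : x ∈ K} and {(x,y,x+y) : x,y ∈ K}. -/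
/-- The linear relation `N = {(x,x,x) : x ∈ K}` (the "black" monoid). -/
def Nrel (K : Type*) [Field K] : Submodule K (K × K × K) where
  carrier := {p | p.2.1 = p.1 ∧ p.2.2 = p.1}
  add_mem' := by
    rintro a b ⟨h1, h2⟩ ⟨h3, h4⟩
    exact ⟨by simp [Prod.fst_add, Prod.snd_add, h1, h3], by simp [h2, h4]⟩
  zero_mem' := ⟨rfl, rfl⟩
  smul_mem' := by
    rintro c a ⟨h1, h2⟩
    exact ⟨by simp [h1], by simp [h2]⟩

/-- The linear relation `B = {(x,y,x+y) : x,y ∈ K}` (the "white" monoid). -/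
def Brel (K : Type*) [Field K] : Submodule K (K × K × K) where
  carrier := {p | p.2.2 = p.1 + p.2.1}
  add_mem' := by
    rintro a b h1 h3
    simp only [Set.mem_setOf_eq] at *
    simp [h1, h3]; ring
  zero_mem' := by simp
  smul_mem' := by
    rintro c a h1
    simp only [Set.mem_setOf_eq] at *
    simp [h1]; ring

lemma memN {K : Type*} [Field K] (a b c : K) :
    ((a, b, c) ∈ Nrel K) ↔ b = a ∧ c = a := Iff.rfl

lemma memB {K : Type*} [Field K] (a b c : K) :
    ((a, b, c) ∈ Brel K) ↔ c = a + b := Iff.rfl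

/-- In `LinRel_K`, the only subspaces `M ⊆ K³` that are unital associative commutative
multiplications (relationally) are `N = {(x,x,x)}` and `B = {(x,y,x+y)}`. -/
theorem stmt11 (K : Type*) [Field K] (M : Submodule K (K × K × K)) :
    ((∃ E : Submodule K K, ∀ x y : K,
        ((∃ t ∈ E, (t, x, y) ∈ M) ↔ x = y) ∧ ((∃ t ∈ E, (x, t, y) ∈ M) ↔ x = y)) ∧
     (∀ x y z w : K,
        (∃ t, (x, y, t) ∈ M ∧ (t, z, w) ∈ M) ↔ (∃ t, (y, z, t) ∈ M ∧ (x, t, w) ∈ M)) ∧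
     (∀ x y z : K, (x, y, z) ∈ M ↔ (y, x, z) ∈ M)) ↔
    (M = Nrel K ∨ M = Brel K) := by
  constructor
  · rintro ⟨⟨E, hE⟩, -, hC⟩
    have hZ : ∀ b c : K, ((0 : K), b, c) ∈ M → b = c := fun b c h =>
      (hE b c).1.mp ⟨0, E.zero_mem, h⟩
    by_cases hB : ((0 : K), (1 : K), (1 : K)) ∈ M
    · right
      have hdiag : ∀ x : K, ((0 : K), x, x) ∈ M := by
        intro x
        have hx : x • ((0 : K), (1 : K), (1 : K)) = ((0 : K), x, x) := by
          refine Prod.ext ?_ (Prod.ext ?_ ?_) <;> simp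
        rw [← hx]
        exact M.smul_mem x hB
      have hdiag' : ∀ x : K, (x, (0 : K), x) ∈ M := fun x => (hC 0 x x).mp (hdiag x)
      have hsum : ∀ a b : K, (a, b, a + b) ∈ M := by
        intro a b
        have := M.add_mem (hdiag' a) (hdiag b)
        simpa [Prod.mk_add_mk] using this
      ext ⟨a, b, c⟩
      rw [memB]
      constructor
      · intro h
        have h2 : ((0 : K), (0 : K), c - (a + b)) ∈ M := by
          have := M.sub_mem h (hsum a b)
          simpa [Prod.mk_sub_mk] using this
        have h3 := hZ _ _ h2
        have := sub_eq_zero.mp h3.symm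
        exact this
      · rintro rfl
        exact hsum a b
    · left
      obtain ⟨u, huE, huM⟩ := (hE 1 1).1.mpr rfl
      have hu0 : u ≠ 0 := by
        rintro rfl
        exact hB huM
      have hz : ∀ b c : K, ((0 : K), b, c) ∈ M → b = 0 ∧ c = 0 := by
        intro b c h
        have hbc : b = c := hZ b c h
        subst hbc
        rcases eq_or_ne b 0 with rfl | hb
        · exact ⟨rfl, rfl⟩
        · exfalso
          apply hB
          have := M.smul_mem b⁻¹ h
          simpa [Prod.smul_mk, smul_eq_mul, hb, inv_mul_cancel₀ hb] using this
      have h1 : ((1 : K), u⁻¹, u⁻¹) ∈ M := by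
        have hx : u⁻¹ • (u, (1 : K), (1 : K)) = ((1 : K), u⁻¹, u⁻¹) := by
          refine Prod.ext ?_ (Prod.ext ?_ ?_) <;> simp [inv_mul_cancel₀ hu0]
        rw [← hx]
        exact M.smul_mem u⁻¹ huM
      have hg : ∀ x y z : K, (x, y, z) ∈ M → y = x * u⁻¹ ∧ z = x * u⁻¹ := by
        intro x y z h
        have hsub : ((0 : K), y - x * u⁻¹, z - x * u⁻¹) ∈ M := by
          have := M.sub_mem h (M.smul_mem x h1)
          simpa [Prod.smul_mk, Prod.mk_sub_mk, smul_eq_mul] using this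
        obtain ⟨h1', h2'⟩ := hz _ _ hsub
        exact ⟨sub_eq_zero.mp h1', sub_eq_zero.mp h2'⟩
      have hc : (u⁻¹, (1 : K), u⁻¹) ∈ M := (hC 1 u⁻¹ u⁻¹).mp h1
      have hinv : u⁻¹ = 1 := by
        have h3 := (hg _ _ _ hc).2
        field_simp at h3
        simp [h3]
      have h111 : ((1 : K), (1 : K), (1 : K)) ∈ M := by
        rw [hinv] at h1; exact h1
      ext ⟨a, b, c⟩
      rw [memN]
      constructor
      · intro h
        obtain ⟨hb, hcc⟩ := hg _ _ _ h
        rw [hinv, mul_one] at hb hcc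
        exact ⟨hb, hcc⟩
      · rintro ⟨hb, hcc⟩
        have hx : (a, b, c) = a • ((1 : K), (1 : K), (1 : K)) := by
          refine Prod.ext ?_ (Prod.ext ?_ ?_) <;> simp [hb, hcc]
        rw [hx]
        exact M.smul_mem a h111
  · rintro (rfl | rfl)
    · refine ⟨⟨⊤, fun x y => ?_⟩, fun x y z w => ?_, fun x y z => ?_⟩
      · simp only [memN]
        constructor
        · constructor
          · rintro ⟨t, -, rfl, rfl⟩; rfl
          · rintro rfl; exact ⟨x, Submodule.mem_top, rfl, rfl⟩
        · constructor
          · rintro ⟨t, -, rfl, rfl⟩; rfl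
          · rintro rfl; exact ⟨x, Submodule.mem_top, rfl, rfl⟩
      · simp only [memN]
        constructor
        · rintro ⟨t, ⟨h1, h2⟩, h3, h4⟩
          exact ⟨y, ⟨by rw [h3, h2]; exact h1.symm, rfl⟩, h1, by rw [h4, h2]⟩
        · rintro ⟨t, ⟨h1, h2⟩, h3, h4⟩
          exact ⟨x, ⟨by rw [← h2]; exact h3, rfl⟩, by rw [h1, ← h2]; exact h3, h4⟩
      · simp only [memN]
        constructor <;> rintro ⟨h1, h2⟩ <;> exact ⟨h1.symm, h2.trans h1.symm⟩
    · refine ⟨⟨⊥, fun x y => ?_⟩, fun x y z w => ?_, fun x y z => ?_⟩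
      · simp only [memB, Submodule.mem_bot]
        constructor
        · constructor
          · rintro ⟨t, rfl, rfl⟩; simp
          · rintro rfl; exact ⟨0, rfl, (zero_add x).symm⟩
        · constructor
          · rintro ⟨t, rfl, rfl⟩; simp
          · rintro rfl; exact ⟨0, rfl, (add_zero x).symm⟩
      · simp only [memB]
        constructor
        · rintro ⟨t, rfl, rfl⟩
          exact ⟨y + z, rfl, by ring⟩
        · rintro ⟨t, rfl, rfl⟩
          exact ⟨x + y, rfl, by ring⟩
      · simp only [memB]
        constructor <;> intro h <;> rw [h] <;> ring
end

section
/- Let X be the 2×2 phase family α_X(a,b) = (a/2)·[[1+b, 1−b],[1−b, 1+b]] and Z the phase family α_Z(a,b) = a·diag(1,b). The compatibility condition c·[[1+d,1−d],[1−d,1+d]]·(a/2)·diag(1,b) = (1/a)·diag(1,1/b)·(2/c)·[[1+1/d,1−1/d],[1−1/d,1+1/d]] (with a,b,c,d ∈ ℂ*) holds if and only if one of: (d = −1 and a²c²b = 4), (d = 1, a²c² = 4, and b² = 1), or (b = −1 and d·a²c² = 4). -/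
open Matrix

section

variable {K : Type*} [Field K]

-- The `(1,0)` entry equation is the `(0,1)` one divided by `b`.
theorem phase_compat_matrix_eq_iff (a b c d : K) (ha : a ≠ 0) (hb : b ≠ 0) (hc : c ≠ 0)
    (hd : d ≠ 0) (h2 : (2 : K) ≠ 0) :
    (c • !![1 + d, 1 - d; 1 - d, 1 + d]) * ((a / 2) • !![(1 : K), 0; 0, b])
      = (a⁻¹ • !![(1 : K), 0; 0, b⁻¹]) *
        ((2 / c) • !![1 + d⁻¹, 1 - d⁻¹; 1 - d⁻¹, 1 + d⁻¹]) ↔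
    (d + 1) * (a ^ 2 * c ^ 2 * d - 4) = 0 ∧ (d - 1) * (a ^ 2 * c ^ 2 * b * d + 4) = 0 ∧
      (d + 1) * (a ^ 2 * c ^ 2 * b ^ 2 * d - 4) = 0 := by
  rw [smul_mul_smul_comm, smul_mul_smul_comm, mul_fin_two, mul_fin_two, ← Matrix.ext_iff,
    Fin.forall_fin_two, Fin.forall_fin_two, Fin.forall_fin_two]
  simp only [Matrix.smul_apply, of_apply, cons_val', cons_val_zero, cons_val_one, empty_val',
    cons_val_fin_one, smul_eq_mul, mul_zero, mul_one, zero_mul, add_zero, zero_add, one_mul]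
  field_simp
  constructor
  · rintro ⟨⟨h00, h01⟩, -, h11⟩
    exact ⟨by linear_combination h00, by linear_combination -h01, by linear_combination h11⟩
  · rintro ⟨h00, h01, h11⟩
    exact ⟨⟨by linear_combination h00, by linear_combination -h01⟩, by linear_combination -h01,
      by linear_combination h11⟩

theorem phase_compat_scalar_eqs_iff (p b d : K) (h2 : (2 : K) ≠ 0) :
    (d + 1) * (p * d - 4) = 0 ∧ (d - 1) * (p * b * d + 4) = 0 ∧
        (d + 1) * (p * b ^ 2 * d - 4) = 0 ↔
      (d = -1 ∧ p * b = 4) ∨ (d = 1 ∧ p = 4 ∧ b ^ 2 = 1) ∨ (b = -1 ∧ d * p = 4) := by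
  have h4 : (4 : K) ≠ 0 := by
    simpa only [show (2 : K) * 2 = 4 by norm_num] using mul_ne_zero h2 h2
  constructor
  · rintro ⟨h00, h01, h11⟩
    by_cases hd : d + 1 = 0
    · obtain rfl : d = -1 := eq_neg_of_add_eq_zero_left hd
      have : 2 * (p * b - 4) = 0 := by linear_combination h01
      exact Or.inl ⟨rfl, sub_eq_zero.1 ((mul_eq_zero.1 this).resolve_left h2)⟩
    have hpd : p * d = 4 := sub_eq_zero.1 ((mul_eq_zero.1 h00).resolve_left hd)
    have hb2 : b ^ 2 = 1 := by
      have : 4 * (b ^ 2 - 1) = 0 := by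
        linear_combination (mul_eq_zero.1 h11).resolve_left hd - b ^ 2 * hpd
      exact sub_eq_zero.1 ((mul_eq_zero.1 this).resolve_left h4)
    have : (d - 1) * (4 * (b + 1)) = 0 := by linear_combination h01 - (d - 1) * b * hpd
    rcases mul_eq_zero.1 this with hd1 | hb1
    · obtain rfl : d = 1 := sub_eq_zero.1 hd1
      exact Or.inr (Or.inl ⟨rfl, by simpa using hpd, hb2⟩)
    · have hb1 : b = -1 := eq_neg_of_add_eq_zero_left ((mul_eq_zero.1 hb1).resolve_left h4)
      exact Or.inr (Or.inr ⟨hb1, by rw [mul_comm, hpd]⟩)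
  · rintro (⟨rfl, h⟩ | ⟨rfl, rfl, h⟩ | ⟨rfl, h⟩)
    · exact ⟨by ring, by linear_combination 2 * h, by ring⟩
    · exact ⟨by ring, by ring, by linear_combination 8 * h⟩
    · exact ⟨by linear_combination (d + 1) * h, by linear_combination (1 - d) * h,
        by linear_combination (d + 1) * h⟩

end

/-- Compatibility of the phase-shifted `Z`/`X` Frobenius structures. -/
theorem stmt14 (a b c d : ℂ) (ha : a ≠ 0) (hb : b ≠ 0) (hc : c ≠ 0) (hd : d ≠ 0) :
    (c • !![1 + d, 1 - d; 1 - d, 1 + d]) * ((a / 2) • !![(1 : ℂ), 0; 0, b])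
      = (a⁻¹ • !![(1 : ℂ), 0; 0, b⁻¹]) *
        ((2 / c) • !![1 + d⁻¹, 1 - d⁻¹; 1 - d⁻¹, 1 + d⁻¹]) ↔
    ((d = -1 ∧ a ^ 2 * c ^ 2 * b = 4) ∨
     (d = 1 ∧ a ^ 2 * c ^ 2 = 4 ∧ b ^ 2 = 1) ∨
     (b = -1 ∧ d * a ^ 2 * c ^ 2 = 4)) := by
  rw [phase_compat_matrix_eq_iff a b c d ha hb hc hd two_ne_zero,
    phase_compat_scalar_eqs_iff _ _ _ two_ne_zero, mul_assoc d]
end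

section
/- For a,b,c ∈ ℂ* and d ∈ ℂ, the matrix equation c·[[1,0],[d,1]]·[[0,1],[1,0]]·a·diag(1,b) = (1/a)·diag(1,1/b)·[[0,1],[1,0]]·(1/c)·[[1,0],[−d,1]] holds if and only if d = 0 and a²c²b = 1. -/
open Matrix

/-- Compatibility of the phase-shifted `Z`/`W` Frobenius structures:
holds iff `d = 0` and `a²c²b = 1`. -/
theorem stmt16 (a b c : ℂ) (d : ℂ) (ha : a ≠ 0) (hb : b ≠ 0) (hc : c ≠ 0) :
    (c • !![(1 : ℂ), 0; d, 1]) * !![(0 : ℂ), 1; 1, 0] * (a • !![(1 : ℂ), 0; 0, b])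
      = (a⁻¹ • !![(1 : ℂ), 0; 0, b⁻¹]) * !![(0 : ℂ), 1; 1, 0] *
        (c⁻¹ • !![(1 : ℂ), 0; -d, 1]) ↔
    (d = 0 ∧ a ^ 2 * c ^ 2 * b = 1) := by
  rw [← Matrix.ext_iff]
  simp [Matrix.mul_apply, Fin.sum_univ_two, Fin.forall_fin_two]
  constructor
  · rintro ⟨⟨h1, h2⟩, h3, _⟩
    have hd : d = 0 := by tauto
    refine ⟨hd, ?_⟩
    field_simp at h2
    linear_combination h2
  · rintro ⟨hd, h⟩
    refine ⟨⟨Or.inr (Or.inr hd), ?_⟩, ?_, Or.inl (Or.inr hd)⟩ <;>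
      field_simp <;> linear_combination h
end

section
/- The Z and W structures on ℂ² satisfy the bigebra law Δ_Z ∘ μ_W = (μ_W ⊗ μ_W) ∘ (id ⊗ σ ⊗ id) ∘ (Δ_Z ⊗ Δ_Z), where μ_W|00⟩=|0⟩, μ_W|01⟩=μ_W|10⟩=|1⟩, μ_W|11⟩=0 and Δ_Z|i⟩=|i⟩⊗|i⟩. However, the counit law ε_Z ∘ μ_W = ε_Z ⊗ ε_Z (with ε_Z|i⟩ = 1) fails, so (μ_W, η_W, Δ_Z, ε_Z) is not a full bialgebra. -/
open Matrix Kronecker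

/-- `ε_Z|i⟩ = 1`. -/
noncomputable def epsZ : Fin 2 → ℂ := fun _ => 1

/-- `Z` and `W` satisfy the bigebra law, but the counit law `ε_Z ∘ μ_W = ε_Z ⊗ ε_Z` fails,
so `(μ_W, η_W, Δ_Z, ε_Z)` is not a full bialgebra. -/
theorem stmt18 :
    deltaZ * muW = (muW ⊗ₖ muW) * mid4 * (deltaZ ⊗ₖ deltaZ) ∧
    (fun p : Fin 2 × Fin 2 => ∑ i : Fin 2, epsZ i * muW i p)
      ≠ (fun p : Fin 2 × Fin 2 => epsZ p.1 * epsZ p.2) := by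
  constructor
  · ext ⟨a, b⟩ ⟨c, d⟩
    simp only [Matrix.mul_apply, deltaZ, muW, mid4, kroneckerMap_apply, Matrix.of_apply,
      Fintype.sum_prod_type]
    fin_cases a <;> fin_cases b <;> fin_cases c <;> fin_cases d <;> norm_num [Fin.sum_univ_two]
  · intro h
    have := congrFun h (1, 1)
    simp only [epsZ, muW, Matrix.of_apply, Fin.sum_univ_two, one_mul] at this
    norm_num at this
end
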